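/- Let H be a bialgebra over a field k. For all a, b ∈ H with ε(a) = ε(b) = 0 one has ∂(ab − ba) = [∂(a), ∂(b)], where ∂(a) = ([a,−], a⊗1 + 1⊗a − Δ(a)) and the bracket of pairs is [(d,φ),(d',φ')] = ([d,d'], (d⊗I + I⊗d)(φ') − (d'⊗I + I⊗d')(φ) − [φ,φ']). In other words, ∂ : ker ε → Der_tw(H) is a homomorphism of Lie algebras. -/

import Mathlib

open scoped TensorProduct

noncomputable section

variable (K H : Type*) [Field K] [Ring H] [Bialgebra K H]

/-- The comultiplication of the bialgebra `H`. -/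
def cm : H →ₗ[K] H ⊗[K] H := Coalgebra.comul

/-- The counit of the bialgebra `H`. -/
def cu : H →ₗ[K] K := Coalgebra.counit

/-- A twisted derivation of the bialgebra `H` is a pair `(d, φ)` where `d` is a
`K`-algebra derivation of `H` and `φ ∈ H ⊗ H`, such that
`(d⊗I + I⊗d)(Δ(x)) − Δ(d(x)) = [φ, Δ(x)]` for all `x`,
`1⊗φ + (I⊗Δ)(φ) = φ⊗1 + (Δ⊗I)(φ)` (co-Hochschild 2-cocycle condition), and
`ε∘d = 0`, `(ε⊗I)(φ) = 0 = (I⊗ε)(φ)`. -/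
structure IsTwistedDerivation (d : H →ₗ[K] H) (φ : H ⊗[K] H) : Prop where
  leibniz : ∀ x y : H, d (x * y) = d x * y + x * d y
  conj : ∀ x : H,
    (LinearMap.rTensor H d + LinearMap.lTensor H d) (cm K H x) - cm K H (d x)
      = φ * cm K H x - cm K H x * φ
  cocycle : (1 : H) ⊗ₜ[K] φ + LinearMap.lTensor H (cm K H) φ
      = TensorProduct.assoc K H H H (φ ⊗ₜ[K] (1 : H) + LinearMap.rTensor H (cm K H) φ)
  counit_comp : ∀ x : H, cu K H (d x) = 0
  counit_left : TensorProduct.lid K H (LinearMap.rTensor H (cu K H) φ) = 0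
  counit_right : TensorProduct.rid K H (LinearMap.lTensor H (cu K H) φ) = 0

/-- The inner derivation `[a, −] : x ↦ ax − xa`. -/
def innerDer (a : H) : H →ₗ[K] H := LinearMap.mulLeft K a - LinearMap.mulRight K a

/-- The coboundary twist `a⊗1 + 1⊗a − Δ(a)`. -/
def bdryTwist (a : H) : H ⊗[K] H := a ⊗ₜ[K] (1 : H) + (1 : H) ⊗ₜ[K] a - cm K H a


/-- The bracket `[(d,φ),(d',φ')] = ([d,d'], (d⊗I + I⊗d)(φ') − (d'⊗I + I⊗d')(φ) − [φ,φ'])`. -/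
def twBracket (p q : (H →ₗ[K] H) × (H ⊗[K] H)) : (H →ₗ[K] H) × (H ⊗[K] H) :=
  (p.1 ∘ₗ q.1 - q.1 ∘ₗ p.1,
    (LinearMap.rTensor H p.1 + LinearMap.lTensor H p.1) q.2
      - (LinearMap.rTensor H q.1 + LinearMap.lTensor H q.1) p.2
      - (p.2 * q.2 - q.2 * p.2))

/-- The inner twisted derivation `∂(a) = ([a,−], a⊗1 + 1⊗a − Δ(a))`, as a pair. -/
def bdryPair (a : H) : (H →ₗ[K] H) × (H ⊗[K] H) := (innerDer K H a, bdryTwist K H a)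

/-! For `d = [a, −]`, the map `d ⊗ I + I ⊗ d` is the commutator with the primitive element
`A = a ⊗ 1 + 1 ⊗ a`, and both `a ↦ A` and `Δ` preserve commutators. Writing the twists as
`A - Δa` and `B - Δb`, the twist part of the bracket collapses, by an identity valid in any ring,
to `[A, B] - [Δa, Δb]`, which is the twist of `ab - ba`. -/

namespace TensorProduct

variable {R A : Type*} [CommSemiring R] [Ring A] [Algebra R A]

lemma rTensor_add_lTensor_mulLeft_sub_mulRight_apply (a : A) (ξ : A ⊗[R] A) :
    (LinearMap.rTensor A (LinearMap.mulLeft R a - LinearMap.mulRight R a)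
        + LinearMap.lTensor A (LinearMap.mulLeft R a - LinearMap.mulRight R a)) ξ
      = (a ⊗ₜ[R] (1 : A) + (1 : A) ⊗ₜ[R] a) * ξ - ξ * (a ⊗ₜ[R] (1 : A) + (1 : A) ⊗ₜ[R] a) := by
  induction ξ using TensorProduct.induction_on with
  | zero => simp
  | tmul x y =>
      simp only [LinearMap.add_apply, LinearMap.rTensor_tmul, LinearMap.lTensor_tmul,
        LinearMap.sub_apply, LinearMap.mulLeft_apply, LinearMap.mulRight_apply, add_mul, mul_add,
        sub_tmul, tmul_sub, Algebra.TensorProduct.tmul_mul_tmul, one_mul, mul_one]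
      abel
  | add x y hx hy =>
      rw [map_add, hx, hy]
      noncomm_ring

lemma commutator_tmul_one_add_one_tmul (a b : A) :
    (a ⊗ₜ[R] (1 : A) + (1 : A) ⊗ₜ[R] a) * (b ⊗ₜ[R] (1 : A) + (1 : A) ⊗ₜ[R] b)
        - (b ⊗ₜ[R] (1 : A) + (1 : A) ⊗ₜ[R] b) * (a ⊗ₜ[R] (1 : A) + (1 : A) ⊗ₜ[R] a)
      = (a * b - b * a) ⊗ₜ[R] (1 : A) + (1 : A) ⊗ₜ[R] (a * b - b * a) := by
  simp only [add_mul, mul_add, sub_tmul, tmul_sub, Algebra.TensorProduct.tmul_mul_tmul,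
    one_mul, mul_one]
  abel

end TensorProduct

lemma Bialgebra.comul_commutator {R A : Type*} [CommSemiring R] [Ring A] [Bialgebra R A] (a b : A) :
    Coalgebra.comul (R := R) (a * b - b * a)
      = Coalgebra.comul (R := R) a * Coalgebra.comul b
        - Coalgebra.comul (R := R) b * Coalgebra.comul a := by
  rw [map_sub, Bialgebra.comul_mul, Bialgebra.comul_mul]

lemma commutator_twist_identity {R : Type*} [Ring R] (A B P Q : R) :
    (A * (B - Q) - (B - Q) * A) - (B * (A - P) - (A - P) * B)
        - ((A - P) * (B - Q) - (B - Q) * (A - P))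
      = (A * B - B * A) - (P * Q - Q * P) := by
  noncomm_ring

lemma innerDer_commutator (a b : H) :
    innerDer K H (a * b - b * a)
      = innerDer K H a ∘ₗ innerDer K H b - innerDer K H b ∘ₗ innerDer K H a := by
  ext x
  simp only [innerDer, LinearMap.sub_apply, LinearMap.comp_apply, LinearMap.mulLeft_apply,
    LinearMap.mulRight_apply]
  noncomm_ring

theorem bdryPair_lieHom (a b : H) :
    bdryPair K H (a * b - b * a) = twBracket K H (bdryPair K H a) (bdryPair K H b) := by
  refine Prod.ext (innerDer_commutator K H a b) ?_
  change bdryTwist K H (a * b - b * a)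
    = (LinearMap.rTensor H (innerDer K H a) + LinearMap.lTensor H (innerDer K H a))
          (bdryTwist K H b)
      - (LinearMap.rTensor H (innerDer K H b) + LinearMap.lTensor H (innerDer K H b))
          (bdryTwist K H a)
      - (bdryTwist K H a * bdryTwist K H b - bdryTwist K H b * bdryTwist K H a)
  unfold innerDer bdryTwist
  rw [TensorProduct.rTensor_add_lTensor_mulLeft_sub_mulRight_apply,
    TensorProduct.rTensor_add_lTensor_mulLeft_sub_mulRight_apply, commutator_twist_identity,
    TensorProduct.commutator_tmul_one_add_one_tmul]
  exact congrArg _ (Bialgebra.comul_commutator a b)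

end
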